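/- (Inductive step of the main theorem) Let n ≥ 2, let W_1, …, W_n be nonempty subsets of M satisfying condition (SD), let i ∈ {1,…,n−1}, and let ≼ be a total preorder on M faithful to W_i such that all worlds outside W_1 ∪ ⋯ ∪ W_i are pairwise ≼-equivalent. Define A = W_{i+1} and C = ∅ if W_i ∩ W_{i+1} = ∅, and A = W_i ∩ W_{i+1} and C = W_{i+1} \ W_i otherwise; let B = M\C. Let ≼' be the lexicographic revision of ≼ by A and let ≼'' be the moderate contraction of ≼' by B. Then min(M, ≼'') = W_{i+1}, and all worlds outside W_1 ∪ ⋯ ∪ W_i ∪ W_{i+1} are pairwise ≼''-equivalent. -/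

import Mathlib

/-- A possible world over the propositional variables `P`. -/
abbrev World (P : Type) := P → Bool

/-- `minSet S le` is the set of `le`-minimal elements of `S`. -/
def minSet {P : Type} (S : Set (World P)) (le : World P → World P → Prop) :
    Set (World P) :=
  {r | r ∈ S ∧ ∀ r' ∈ S, le r r'}

/-- A total preorder: reflexive, transitive and total. -/
def TotalPreorder {P : Type} (le : World P → World P → Prop) : Prop :=
  Reflexive le ∧ Transitive le ∧ ∀ r r', le r r' ∨ le r' r

/-- `le` is faithful to `W` iff the `le`-minimal worlds are exactly `W`. -/
def Faithful {P : Type} (le : World P → World P → Prop) (W : Set (World P)) : Prop :=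
  minSet Set.univ le = W

/-- The strict part of a preorder. -/
def strictPart {P : Type} (le : World P → World P → Prop) (r r' : World P) : Prop :=
  le r r' ∧ ¬ le r' r

/-- The full-meet preorder of a belief set `W`. -/
def fullMeet {P : Type} (W : Set (World P)) : World P → World P → Prop :=
  fun r r' => r ∈ W ∨ r' ∉ W

/-- Type-B distance: the symmetric difference of the model sets. -/
def distB {P : Type} (W1 W2 : Set (World P)) : Set (World P) :=
  (W1 \ W2) ∪ (W2 \ W1)

/-- Condition (SD) on a sequence of belief sets. -/
def SD {P : Type} {n : ℕ} (W : Fin n → Set (World P)) : Prop :=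
  ∀ i j m : Fin n, i < j → j < m → distB (W j) (W m) ⊆ distB (W i) (W m)

/-- Lexicographic revision of the preorder `le` by the (nonempty) input `A`. -/
def lexRev {P : Type} (le : World P → World P → Prop) (A : Set (World P)) :
    World P → World P → Prop :=
  fun r r' => (r ∈ A ∧ r' ∉ A) ∨ ((r ∈ A ↔ r' ∈ A) ∧ le r r')

/-- `le''` is the moderate contraction of `le` (faithful to `R`) by `B`:
conditions (C1), (C2), (MC) and faithfulness to `R ∪ min(M\B, le)`. -/
def IsModCon {P : Type} (le : World P → World P → Prop) (R B : Set (World P))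
    (le'' : World P → World P → Prop) : Prop :=
  TotalPreorder le'' ∧
  (∀ r r', r ∈ B → r' ∈ B → (le'' r r' ↔ le r r')) ∧
  (∀ r r', r ∉ B → r' ∉ B → (le'' r r' ↔ le r r')) ∧
  (∀ r r', r ∉ B → r' ∈ B → r' ∉ R ∪ minSet Bᶜ le → strictPart le'' r r') ∧
  minSet Set.univ le'' = R ∪ minSet Bᶜ le

/-!
Lexicographic revision by `A` moves `A` to the bottom, and `≼` is flat on `A`: either `A ⊆ W_i`,
the `≼`-minimum, or `A = W_{i+1}` is disjoint from `W_i` and hence, by (SD), from all of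
`W_1 ∪ ⋯ ∪ W_i`. So the revised minimum is `A`. Moderate contraction by `M \ C` adds
`min(C, ≼') = C`, again because (SD) puts `C ⊆ W_{i+1} \ W_i` outside `W_1 ∪ ⋯ ∪ W_i`, and
`A ∪ C = W_{i+1}`. Worlds outside `W_1 ∪ ⋯ ∪ W_{i+1}` lie in neither `A` nor `C`, so both
operations keep the tie between them.
-/

open Set

section Preorders

variable {P : Type} {le : World P → World P → Prop}

theorem minSet_eq_self {S : Set (World P)} (h : ∀ r ∈ S, ∀ r' ∈ S, le r r') :
    minSet S le = S :=
  Set.ext fun r => ⟨And.left, fun hr => ⟨hr, h r hr⟩⟩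

theorem Faithful.le_of_mem {W : Set (World P)} (h : Faithful le W) {r : World P} (hr : r ∈ W)
    (r' : World P) : le r r' :=
  (h.symm ▸ hr : r ∈ minSet univ le).2 r' trivial

variable {A : Set (World P)}

theorem lexRev_iff_of_notMem {r r' : World P} (hr : r ∉ A) (hr' : r' ∉ A) :
    lexRev le A r r' ↔ le r r' := by
  simp [lexRev, hr, hr']

theorem minSet_univ_lexRev (hA : A.Nonempty) (hAle : ∀ a ∈ A, ∀ a' ∈ A, le a a') :
    minSet univ (lexRev le A) = A := by
  ext r
  constructor
  · rintro ⟨-, hmin⟩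
    obtain ⟨a, ha⟩ := hA
    by_contra hr
    rcases hmin a trivial with ⟨hrA, -⟩ | ⟨hiff, -⟩
    exacts [hr hrA, hr (hiff.mpr ha)]
  · intro hr
    refine ⟨trivial, fun r' _ => ?_⟩
    by_cases hr' : r' ∈ A
    · exact Or.inr ⟨iff_of_true hr hr', hAle r hr r' hr'⟩
    · exact Or.inl ⟨hr, hr'⟩

theorem minSet_lexRev_of_disjoint {C : Set (World P)} (hCA : Disjoint C A)
    (hCle : ∀ c ∈ C, ∀ c' ∈ C, le c c') : minSet C (lexRev le A) = C :=
  minSet_eq_self fun c hc c' hc' =>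
    (lexRev_iff_of_notMem (hCA.notMem_of_mem_left hc) (hCA.notMem_of_mem_left hc')).mpr
      (hCle c hc c' hc')

theorem IsModCon.lexRev_step {U C : Set (World P)} {le'' : World P → World P → Prop}
    (hout : ∀ r r', r ∉ U → r' ∉ U → le r r' ∧ le r' r)
    (hA : A.Nonempty) (hAle : ∀ a ∈ A, ∀ a' ∈ A, le a a')
    (hCA : Disjoint C A) (hCU : Disjoint C U)
    (hmod : IsModCon (lexRev le A) (minSet univ (lexRev le A)) Cᶜ le'') :
    minSet univ le'' = A ∪ C ∧
      ∀ r r', r ∉ U ∪ (A ∪ C) → r' ∉ U ∪ (A ∪ C) → le'' r r' ∧ le'' r' r := by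
  obtain ⟨-, hC1, -, -, hmin⟩ := hmod
  have hCle : ∀ c ∈ C, ∀ c' ∈ C, le c c' := fun c hc c' hc' =>
    (hout c c' (hCU.notMem_of_mem_left hc) (hCU.notMem_of_mem_left hc')).1
  refine ⟨?_, fun r r' hr hr' => ?_⟩
  · rw [hmin, compl_compl, minSet_univ_lexRev hA hAle, minSet_lexRev_of_disjoint hCA hCle]
  · simp only [mem_union, not_or] at hr hr'
    have hle := hout r r' hr.1 hr'.1
    rw [hC1 r r' hr.2.2 hr'.2.2, hC1 r' r hr'.2.2 hr.2.2,
      lexRev_iff_of_notMem hr.2.1 hr'.2.1, lexRev_iff_of_notMem hr'.2.1 hr.2.1]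
    exact hle

end Preorders

theorem SD.disjoint_sdiff_biUnion {P : Type} {n : ℕ} {W : Fin n → Set (World P)}
    (hSD : SD W) {k m : Fin n} (hkm : k < m) :
    Disjoint (W m \ W k) (⋃ (j : Fin n) (_ : (j : ℕ) ≤ k), W j) := by
  rw [Set.disjoint_left]
  intro x hx hxU
  simp only [mem_iUnion] at hxU
  obtain ⟨j, hjk, hxj⟩ := hxU
  rcases hjk.lt_or_eq with hjk | hjk
  · rcases hSD j k m hjk hkm (Or.inr hx) with h | h
    exacts [h.2 hx.1, h.2 hxj]
  · exact hx.2 (Fin.ext hjk ▸ hxj)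

theorem statement5 {P : Type} {n : ℕ}
    (W : Fin n → Set (World P)) (hne : ∀ i, (W i).Nonempty) (hSD : SD W)
    (i : ℕ) (hi : i + 1 < n)
    (le : World P → World P → Prop)
    (hfaith : Faithful le (W ⟨i, by omega⟩))
    (hout : ∀ r r', r ∉ (⋃ (j : Fin n) (_ : (j : ℕ) ≤ i), W j) →
      r' ∉ (⋃ (j : Fin n) (_ : (j : ℕ) ≤ i), W j) → le r r' ∧ le r' r)
    (A C : Set (World P))
    (hAC : (W ⟨i, by omega⟩ ∩ W ⟨i + 1, hi⟩ = ∅ ∧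
              A = W ⟨i + 1, hi⟩ ∧ C = ∅) ∨
           (W ⟨i, by omega⟩ ∩ W ⟨i + 1, hi⟩ ≠ ∅ ∧
              A = W ⟨i, by omega⟩ ∩ W ⟨i + 1, hi⟩ ∧
              C = W ⟨i + 1, hi⟩ \ W ⟨i, by omega⟩))
    (le'' : World P → World P → Prop)
    (hmod : IsModCon (lexRev le A) (minSet Set.univ (lexRev le A)) Cᶜ le'') :
    minSet Set.univ le'' = W ⟨i + 1, hi⟩ ∧
    ∀ r r', r ∉ ((⋃ (j : Fin n) (_ : (j : ℕ) ≤ i), W j) ∪ W ⟨i + 1, hi⟩) →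
      r' ∉ ((⋃ (j : Fin n) (_ : (j : ℕ) ≤ i), W j) ∪ W ⟨i + 1, hi⟩) →
      le'' r r' ∧ le'' r' r := by
  have hnew := hSD.disjoint_sdiff_biUnion (k := ⟨i, by omega⟩) (m := ⟨i + 1, hi⟩) (by simp)
  obtain ⟨hA, hAle, hCA, hCU, hW⟩ : A.Nonempty ∧ (∀ a ∈ A, ∀ a' ∈ A, le a a') ∧
      Disjoint C A ∧ Disjoint C (⋃ (j : Fin n) (_ : (j : ℕ) ≤ i), W j) ∧
      A ∪ C = W ⟨i + 1, hi⟩ := by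
    rcases hAC with ⟨hdisj, rfl, rfl⟩ | ⟨hmeet, rfl, rfl⟩
    · have hAU : W ⟨i + 1, hi⟩ ⊆ (⋃ (j : Fin n) (_ : (j : ℕ) ≤ i), W j)ᶜ := fun a ha =>
        hnew.notMem_of_mem_left ⟨ha, fun ha' => hdisj.subset ⟨ha', ha⟩⟩
      exact ⟨hne _, fun a ha a' ha' => (hout a a' (hAU ha) (hAU ha')).1,
        empty_disjoint _, empty_disjoint _, union_empty _⟩
    · exact ⟨nonempty_iff_ne_empty.mpr hmeet, fun a ha a' _ => hfaith.le_of_mem ha.1 a',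
        disjoint_sdiff_left.mono_right inter_subset_left, hnew,
        by rw [inter_comm, inter_union_sdiff]⟩
  rw [← hW]
  exact hmod.lexRev_step hout hA hAle hCA hCU
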